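/- Let k ≥ 1 and 1 ≤ 2f ≤ k+1, and let F = Ω₂f ⊕ I_{k+1-2f} be the (k+1)×(k+1) block diagonal complex matrix where Ω₂f = [[0, I_f],[-I_f, 0]] is the standard symplectic form on C^{2f}. A block matrix g = [[A, B],[C, D]] (with A of size 2f × 2f and D of size (k+1-2f) × (k+1-2f)) satisfies gᵀFg = F if and only if B = 0, C = 0, A is symplectic (AᵀΩ₂fA = Ω₂f), and D is orthogonal (DᵀD = I). -/

import Mathlib

/-!
Transposing `gᵀ F g = F` shows that `g` preserves the symmetric and the alternating part of `F`
separately (here `2` is invertible). For `F = Ω ⊕ I` these are `0 ⊕ I` and `Ω ⊕ 0`. Preserving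
`0 ⊕ I` says `DᵀD = 1` and `DᵀC = 0`, and `D` is invertible, so `C = 0`. Preserving `Ω ⊕ 0` says
`AᵀΩA = Ω` and `AᵀΩB = 0`, and `AᵀΩ` is invertible because `Ω` is, so `B = 0`.
-/

open Matrix

/-- The standard symplectic matrix `Ω₂f = [[0, I_f],[-I_f, 0]]` of size `2f × 2f`. -/
noncomputable def Omega (f : ℕ) : Matrix (Fin f ⊕ Fin f) (Fin f ⊕ Fin f) ℂ :=
  Matrix.fromBlocks 0 1 (-1) 0

namespace Matrix

variable {m n R : Type*} [Fintype m] [Fintype n] [CommRing R]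

theorem transpose_mul_add_mul_eq_add_iff (h2 : IsUnit (2 : R)) (g S K : Matrix n n R)
    (hS : Sᵀ = S) (hK : Kᵀ = -K) :
    gᵀ * (S + K) * g = S + K ↔ gᵀ * S * g = S ∧ gᵀ * K * g = K := by
  refine ⟨fun h ↦ ?_, fun ⟨hgS, hgK⟩ ↦ by rw [Matrix.mul_add, Matrix.add_mul, hgS, hgK]⟩
  rw [Matrix.mul_add, Matrix.add_mul] at h
  have hsub : gᵀ * S * g - gᵀ * K * g = S - K := by
    have := congrArg transpose h
    simp only [transpose_add, transpose_mul, transpose_transpose, hS, hK, Matrix.mul_neg,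
      Matrix.neg_mul, ← Matrix.mul_assoc] at this
    rw [sub_eq_add_neg, sub_eq_add_neg, this]
  constructor
  · rw [← h2.smul_left_cancel, two_smul, two_smul]
    calc gᵀ * S * g + gᵀ * S * g
        = (gᵀ * S * g + gᵀ * K * g) + (gᵀ * S * g - gᵀ * K * g) := by abel
      _ = S + S := by rw [h, hsub]; abel
  · rw [← h2.smul_left_cancel, two_smul, two_smul]
    calc gᵀ * K * g + gᵀ * K * g
        = (gᵀ * S * g + gᵀ * K * g) - (gᵀ * S * g - gᵀ * K * g) := by abel
      _ = K + K := by rw [h, hsub]; abel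

theorem fromBlocks_transpose_mul_fromBlocks_zero_one_mul_eq_iff [DecidableEq n]
    (A : Matrix m m R) (B : Matrix m n R) (C : Matrix n m R) (D : Matrix n n R) :
    (fromBlocks A B C D)ᵀ * fromBlocks 0 0 0 1 * fromBlocks A B C D = fromBlocks 0 0 0 1 ↔
      C = 0 ∧ Dᵀ * D = 1 := by
  simp only [fromBlocks_transpose, fromBlocks_multiply, Matrix.mul_zero, Matrix.zero_mul,
    Matrix.mul_one, add_zero, zero_add, fromBlocks_inj]
  constructor
  · rintro ⟨-, -, hDC, hDD⟩
    have hDDt : D * Dᵀ = 1 := mul_eq_one_comm.mp hDD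
    refine ⟨?_, hDD⟩
    calc C = D * (Dᵀ * C) := by rw [← Matrix.mul_assoc, hDDt, Matrix.one_mul]
      _ = 0 := by rw [hDC, Matrix.mul_zero]
  · rintro ⟨rfl, hDD⟩
    simp [hDD]

theorem fromBlocks_transpose_mul_fromBlocks_zero_mul_eq_iff [DecidableEq m]
    (K K' : Matrix m m R) (hK : K * K' = 1)
    (A : Matrix m m R) (B : Matrix m n R) (C : Matrix n m R) (D : Matrix n n R) :
    (fromBlocks A B C D)ᵀ * fromBlocks K 0 0 0 * fromBlocks A B C D = fromBlocks K 0 0 0 ↔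
      B = 0 ∧ Aᵀ * K * A = K := by
  simp only [fromBlocks_transpose, fromBlocks_multiply, Matrix.mul_zero, Matrix.zero_mul,
    add_zero, fromBlocks_inj]
  constructor
  · rintro ⟨hA, hAB, -, -⟩
    have hinv : A * K' * (Aᵀ * K) = 1 :=
      mul_eq_one_comm.mp (by rw [← Matrix.mul_assoc, hA, hK])
    refine ⟨?_, hA⟩
    calc B = A * K' * (Aᵀ * K * B) := by rw [← Matrix.mul_assoc, hinv, Matrix.one_mul]
      _ = 0 := by rw [hAB, Matrix.mul_zero]
  · rintro ⟨rfl, hA⟩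
    simp [hA]

end Matrix

theorem Omega_transpose (f : ℕ) : (Omega f)ᵀ = -Omega f := by
  simp [Omega, fromBlocks_transpose, fromBlocks_neg]

theorem Omega_mul_neg_Omega (f : ℕ) : Omega f * -Omega f = 1 := by
  simp [Omega, fromBlocks_multiply, ← fromBlocks_one, fromBlocks_neg]

theorem stmt_5_general (k f : ℕ)
    (A : Matrix (Fin f ⊕ Fin f) (Fin f ⊕ Fin f) ℂ)
    (B : Matrix (Fin f ⊕ Fin f) (Fin (k + 1 - 2 * f)) ℂ)
    (C : Matrix (Fin (k + 1 - 2 * f)) (Fin f ⊕ Fin f) ℂ)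
    (D : Matrix (Fin (k + 1 - 2 * f)) (Fin (k + 1 - 2 * f)) ℂ) :
    (Matrix.fromBlocks A B C D)ᵀ * Matrix.fromBlocks (Omega f) 0 0 1 *
        Matrix.fromBlocks A B C D = Matrix.fromBlocks (Omega f) 0 0 1 ↔
      B = 0 ∧ C = 0 ∧ Aᵀ * Omega f * A = Omega f ∧ Dᵀ * D = 1 := by
  have hsplit : fromBlocks (Omega f) 0 0 (1 : Matrix (Fin (k + 1 - 2 * f)) (Fin (k + 1 - 2 * f)) ℂ) =
      fromBlocks 0 0 0 1 + fromBlocks (Omega f) 0 0 0 := by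
    simp [fromBlocks_add]
  have h2 : IsUnit (2 : ℂ) := isUnit_iff_ne_zero.mpr two_ne_zero
  rw [hsplit, transpose_mul_add_mul_eq_add_iff h2 _ _ _ (by simp [fromBlocks_transpose])
      (by simp [fromBlocks_transpose, fromBlocks_neg, Omega_transpose]),
    fromBlocks_transpose_mul_fromBlocks_zero_one_mul_eq_iff,
    fromBlocks_transpose_mul_fromBlocks_zero_mul_eq_iff _ _ (Omega_mul_neg_Omega f)]
  tauto

theorem stmt_5 (k f : ℕ) (hk : 1 ≤ k) (hf : 1 ≤ 2 * f) (hfk : 2 * f ≤ k + 1)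
    (A : Matrix (Fin f ⊕ Fin f) (Fin f ⊕ Fin f) ℂ)
    (B : Matrix (Fin f ⊕ Fin f) (Fin (k + 1 - 2 * f)) ℂ)
    (C : Matrix (Fin (k + 1 - 2 * f)) (Fin f ⊕ Fin f) ℂ)
    (D : Matrix (Fin (k + 1 - 2 * f)) (Fin (k + 1 - 2 * f)) ℂ) :
    (Matrix.fromBlocks A B C D)ᵀ * Matrix.fromBlocks (Omega f) 0 0 1 *
        Matrix.fromBlocks A B C D = Matrix.fromBlocks (Omega f) 0 0 1 ↔
      B = 0 ∧ C = 0 ∧ Aᵀ * Omega f * A = Omega f ∧ Dᵀ * D = 1 :=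
  stmt_5_general k f A B C D
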